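/- Energy dissipation identity for the Schrödinger–Langevin equation: let ψ ∈ C([0,T); H²(𝕋)) solve i∂_tψ + (1/2)∂_x²ψ = f'(|ψ|²)ψ + (1/τ)Sψ + Vψ, with S the phase function satisfying ∂_x S = Im(∂_xψ/ψ) and V solving −∂_x²V = |ψ|² − C(x). Then the energy E(t) = ∫_𝕋 (1/2)|∂_xψ|² + f(|ψ|²) + (1/2)(∂_xV)² dx satisfies E(t) + (1/τ)∫₀ᵗ∫_𝕋 ρ v² dx ds = E(0), where ρ = |ψ|², v = Im(∂_xψ/ψ). -/

import Mathlib

/-!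
Write `ρ = |ψ|²`, `v = Im (∂ₓψ / ψ)` and `e` for the energy density. Since the potential
`W = f'(ρ) + S / τ + V` is real, the equation gives `Re (conj ∂ₓ²ψ · ∂ₜψ) = W ∂ₜρ` and the
continuity equation `∂ₜρ + ∂ₓ(ρ v) = 0`; together with `∂ₓS = v` they yield the local balance law
`∂ₜe + ρ v² / τ = ∂ₓG + (V ∂ₜρ - (ρ - C) ∂ₜV)` for an explicit flux `G`. Subtracting the equation
at `x` and `x + 1` shows that `S`, hence `G`, is periodic, so `∫ ∂ₓG = 0`. The last term integrates
to zero because `∫ V(s) (ρ(r) - C) = ∫ ∂ₓV(s) ∂ₓV(r)` is symmetric in `s` and `r`. Hence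
`dE/dt = -(1/τ) ∫ ρ v²`, and the identity follows by integrating in time.
-/

open Real Complex MeasureTheory Function Set Filter
open scoped InnerProductSpace Topology

section PartialDerivatives

variable {E : Type*} [NormedAddCommGroup E] [NormedSpace ℝ E]

/- Partial derivatives as derivatives of the slices, so that the hypotheses
`deriv (fun y => ψ t y) x` of the theorem are literally `∂ₓ ψ t x`. -/
noncomputable def timeDeriv (F : ℝ → ℝ → E) (t x : ℝ) : E := deriv (fun s => F s x) t

noncomputable def spaceDeriv (F : ℝ → ℝ → E) (t x : ℝ) : E := deriv (fun y => F t y) x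

notation "∂ₜ" => timeDeriv
notation "∂ₓ" => spaceDeriv

variable {F : ℝ → ℝ → E} {t x : ℝ}

theorem timeDeriv_eq_fderiv (hF : DifferentiableAt ℝ (uncurry F) (t, x)) :
    ∂ₜ F t x = fderiv ℝ (uncurry F) (t, x) (1, 0) :=
  (hF.hasFDerivAt.comp_hasDerivAt (f := fun s => (s, x)) t
    ((hasDerivAt_id t).prodMk (hasDerivAt_const t x))).deriv

theorem spaceDeriv_eq_fderiv (hF : DifferentiableAt ℝ (uncurry F) (t, x)) :
    ∂ₓ F t x = fderiv ℝ (uncurry F) (t, x) (0, 1) :=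
  (hF.hasFDerivAt.comp_hasDerivAt (f := fun y => (t, y)) x
    ((hasDerivAt_const x t).prodMk (hasDerivAt_id x))).deriv

theorem hasDerivAt_timeDeriv (hF : DifferentiableAt ℝ (uncurry F) (t, x)) :
    HasDerivAt (fun s => F s x) (∂ₜ F t x) t :=
  (DifferentiableAt.comp (f := fun s => (s, x)) t hF
    (differentiableAt_id.prodMk (differentiableAt_const x))).hasDerivAt

theorem hasDerivAt_spaceDeriv (hF : DifferentiableAt ℝ (uncurry F) (t, x)) :
    HasDerivAt (fun y => F t y) (∂ₓ F t x) x :=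
  (DifferentiableAt.comp (f := fun y => (t, y)) x hF
    ((differentiableAt_const t).prodMk differentiableAt_id)).hasDerivAt

theorem uncurry_timeDeriv (hF : Differentiable ℝ (uncurry F)) :
    uncurry (∂ₜ F) = fun p => fderiv ℝ (uncurry F) p (1, 0) :=
  funext fun _ => timeDeriv_eq_fderiv (hF _)

theorem uncurry_spaceDeriv (hF : Differentiable ℝ (uncurry F)) :
    uncurry (∂ₓ F) = fun p => fderiv ℝ (uncurry F) p (0, 1) :=
  funext fun _ => spaceDeriv_eq_fderiv (hF _)

theorem ContDiff.uncurry_timeDeriv {n : WithTop ℕ∞} (hF : ContDiff ℝ (n + 1) (uncurry F)) :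
    ContDiff ℝ n (uncurry (∂ₜ F)) := by
  rw [_root_.uncurry_timeDeriv (hF.differentiable (by simp))]
  exact (hF.fderiv_right le_rfl).clm_apply contDiff_const

theorem ContDiff.uncurry_spaceDeriv {n : WithTop ℕ∞} (hF : ContDiff ℝ (n + 1) (uncurry F)) :
    ContDiff ℝ n (uncurry (∂ₓ F)) := by
  rw [_root_.uncurry_spaceDeriv (hF.differentiable (by simp))]
  exact (hF.fderiv_right le_rfl).clm_apply contDiff_const

theorem ContDiff.continuous_uncurry_timeDeriv (hF : ContDiff ℝ 1 (uncurry F)) :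
    Continuous (uncurry (∂ₜ F)) :=
  (ContDiff.uncurry_timeDeriv (n := 0) (by simpa using hF)).continuous

theorem ContDiff.continuous_uncurry_spaceDeriv (hF : ContDiff ℝ 1 (uncurry F)) :
    Continuous (uncurry (∂ₓ F)) :=
  (ContDiff.uncurry_spaceDeriv (n := 0) (by simpa using hF)).continuous

theorem fderiv_fderiv_apply {H : Type*} [NormedAddCommGroup H] [NormedSpace ℝ H] {G : H → E}
    {p : H} (hG : DifferentiableAt ℝ (fderiv ℝ G) p) (v w : H) :
    fderiv ℝ (fun q => fderiv ℝ G q v) p w = fderiv ℝ (fderiv ℝ G) p w v := by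
  simp [fderiv_clm_apply hG (differentiableAt_const v)]

theorem timeDeriv_spaceDeriv (hF : ContDiff ℝ 2 (uncurry F)) (t x : ℝ) :
    ∂ₜ (∂ₓ F) t x = ∂ₓ (∂ₜ F) t x := by
  have hd := hF.differentiable (by simp)
  have hdd : DifferentiableAt ℝ (fderiv ℝ (uncurry F)) (t, x) :=
    (hF.fderiv_right (m := 1) (by norm_num)).differentiable (by simp) _
  rw [timeDeriv_eq_fderiv ((ContDiff.uncurry_spaceDeriv (n := 1) hF).differentiable (by simp) _),
    spaceDeriv_eq_fderiv ((ContDiff.uncurry_timeDeriv (n := 1) hF).differentiable (by simp) _),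
    uncurry_spaceDeriv hd, uncurry_timeDeriv hd, fderiv_fderiv_apply hdd, fderiv_fderiv_apply hdd]
  exact (hF.contDiffAt.isSymmSndFDerivAt (by simp [minSmoothness_of_isRCLikeNormedField])).eq _ _

theorem Function.Periodic.deriv {f : ℝ → E} {c : ℝ} (hf : Periodic f c) :
    Periodic (deriv f) c :=
  fun x => by rw [← deriv_comp_add_const, hf.funext]

theorem periodic_timeDeriv {c : ℝ} (hF : ∀ t, Periodic (F t) c) (t : ℝ) :
    Periodic (∂ₜ F t) c :=
  fun x => congrArg (fun g : ℝ → E => deriv g t) (funext fun s => hF s x)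

theorem periodic_spaceDeriv {c : ℝ} (hF : ∀ t, Periodic (F t) c) (t : ℝ) :
    Periodic (∂ₓ F t) c :=
  (hF t).deriv

end PartialDerivatives

section Integrals

variable {E : Type*} [NormedAddCommGroup E] [NormedSpace ℝ E]

theorem hasDerivAt_intervalIntegral_of_continuous {g g' : ℝ → ℝ → E}
    (hg : Continuous (uncurry g)) (hg' : Continuous (uncurry g'))
    (hderiv : ∀ t x, HasDerivAt (fun s => g s x) (g' t x) t) (a b t : ℝ) :
    HasDerivAt (fun s => ∫ x in a..b, g s x) (∫ x in a..b, g' t x) t := by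
  obtain ⟨M, hM⟩ := (isCompact_closedBall t 1 |>.prod isCompact_uIcc).exists_bound_of_continuousOn
    hg'.continuousOn
  refine (intervalIntegral.hasDerivAt_integral_of_dominated_loc_of_deriv_le
    (bound := fun _ => M) (Metric.closedBall_mem_nhds t one_pos) ?_ ?_ ?_ ?_
    intervalIntegrable_const ?_).2
  · exact .of_forall fun s => (hg.comp (Continuous.prodMk_right s)).aestronglyMeasurable
  · exact (hg.comp (Continuous.prodMk_right t)).intervalIntegrable a b
  · exact (hg'.comp (Continuous.prodMk_right t)).aestronglyMeasurable
  · exact .of_forall fun x hx s hs => hM (s, x) ⟨hs, uIoc_subset_uIcc hx⟩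
  · exact .of_forall fun x _ s _ => hderiv s x

theorem integral_deriv_eq_zero_of_periodic [CompleteSpace E] {u u' : ℝ → E} {c : ℝ}
    (hu : ∀ x, HasDerivAt u (u' x) x) (hu' : Continuous u') (hper : Periodic u c) :
    ∫ x in 0..c, u' x = 0 := by
  rw [intervalIntegral.integral_eq_sub_of_hasDerivAt (fun x _ => hu x)
    (hu'.intervalIntegrable 0 c), ← zero_add c, hper, sub_self]

theorem integral_mul_deriv_eq_neg_of_periodic {u u' v v' : ℝ → ℝ} {c : ℝ}
    (hu : ∀ x, HasDerivAt u (u' x) x) (hv : ∀ x, HasDerivAt v (v' x) x)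
    (hu' : Continuous u') (hv' : Continuous v') (hu_per : Periodic u c) (hv_per : Periodic v c) :
    ∫ x in 0..c, u x * v' x = -∫ x in 0..c, u' x * v x := by
  rw [intervalIntegral.integral_mul_deriv_eq_deriv_mul (fun x _ => hu x) (fun x _ => hv x)
    (hu'.intervalIntegrable 0 c) (hv'.intervalIntegrable 0 c), ← zero_add c, hu_per, hv_per]
  ring

theorem integral_mul_timeDeriv_eq_of_poisson {V g g' : ℝ → ℝ → ℝ} {T s : ℝ}
    (hV : ContDiff ℝ 2 (uncurry V)) (hVper : ∀ t, Periodic (V t) 1)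
    (hg : Continuous (uncurry g)) (hg' : Continuous (uncurry g'))
    (hderiv : ∀ t x, HasDerivAt (fun r => g r x) (g' t x) t)
    (hPoisson : ∀ t ∈ Ico 0 T, ∀ x, -∂ₓ (∂ₓ V) t x = g t x) (hs : s ∈ Ico 0 T) :
    ∫ x in 0..1, g s x * ∂ₜ V s x = ∫ x in 0..1, V s x * g' s x := by
  have hV1 := hV.differentiable (by simp)
  have hVx := ContDiff.uncurry_spaceDeriv (n := 1) hV
  have := hV.continuous
  have := hVx.continuous
  have := (ContDiff.uncurry_spaceDeriv (n := 0) hVx).continuous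
  have := (hV.of_le one_le_two).continuous_uncurry_timeDeriv
  have pairing : ∀ r ∈ Ico 0 T, ∀ q,
      ∫ x in 0..1, V q x * g r x = ∫ x in 0..1, ∂ₓ V q x * ∂ₓ V r x := fun r hr q => by
    have := integral_mul_deriv_eq_neg_of_periodic (fun x => hasDerivAt_spaceDeriv (hV1 (q, x)))
      (fun x => hasDerivAt_spaceDeriv (hVx.differentiable (by simp) (r, x)))
      (by fun_prop) (by fun_prop) (hVper q) (periodic_spaceDeriv hVper r)
    have hVxx : ∀ x, ∂ₓ (∂ₓ V) r x = -g r x := fun x => by linarith [hPoisson r hr x]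
    simpa only [hVxx, mul_neg, intervalIntegral.integral_neg, neg_inj] using this
  -- Both sides are derivatives at `r = s` of `r ↦ ∫ V s * g r` and `r ↦ ∫ V r * g s`, which
  -- agree on `[s, T)` by `pairing`; at `s = 0` only the right derivative can be compared.
  have hA := hasDerivAt_intervalIntegral_of_continuous (g := fun r x => V s x * g r x)
    (by fun_prop) (by fun_prop) (fun t x => (hderiv t x).const_mul (V s x)) 0 1 s
  have hB := hasDerivAt_intervalIntegral_of_continuous (g := fun r x => V r x * g s x)
    (by fun_prop) (by fun_prop)
    (fun t x => (hasDerivAt_timeDeriv (hV1 (t, x))).mul_const (g s x)) 0 1 s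
  have hAB : (fun r => ∫ x in 0..1, V r x * g s x) =ᶠ[𝓝[Ici s] s]
      fun r => ∫ x in 0..1, V s x * g r x := by
    filter_upwards [Ico_mem_nhdsGE_of_mem hs] with r hr
    simp only [pairing s hs, pairing r hr, mul_comm]
  simp only [mul_comm (g s _)]
  exact (uniqueDiffWithinAt_Ici s).eq_deriv _
    (hB.hasDerivWithinAt.congr_of_eventuallyEq hAB.symm rfl) hA.hasDerivWithinAt

end Integrals

section SchrodingerAlgebra

variable {a b c d : ℂ} {W : ℝ}

/- Also true for `a = 0`, where `b / a = 0`. -/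
theorem Complex.inner_I_mul_eq_sq_norm_mul_im_div (a b : ℂ) :
    ⟪I * a, b⟫_ℝ = ‖a‖ ^ 2 * (b / a).im := by
  rcases eq_or_ne a 0 with rfl | ha
  · simp
  · conv_lhs => rw [← mul_div_cancel₀ b ha]
    simp only [Complex.inner, map_mul, conj_I, mul_re, mul_im, conj_re, conj_im, neg_re, neg_im,
      I_re, I_im]
    rw [← normSq_eq_norm_sq, normSq_apply]
    ring

theorem continuity_eq_of_schrodinger (h : I * c + 1 / 2 * d = (W : ℂ) * a) (b : ℂ) :
    2 * ⟪a, c⟫_ℝ + (⟪I * b, b⟫_ℝ + ⟪I * a, d⟫_ℝ) = 0 := by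
  have hre := congrArg re h
  have him := congrArg im h
  simp only [Complex.inner, map_mul, conj_I, mul_re, mul_im, conj_re, conj_im, I_re, I_im,
    ofReal_re, ofReal_im, add_re, add_im] at hre him ⊢
  norm_num at hre him ⊢
  linear_combination (-2 * a.im) * hre + (2 * a.re) * him

theorem inner_eq_potential_mul_of_schrodinger (h : I * c + 1 / 2 * d = (W : ℂ) * a) :
    ⟪d, c⟫_ℝ = W * (2 * ⟪a, c⟫_ℝ) := by
  have hre := congrArg re h
  have him := congrArg im h
  simp only [Complex.inner, mul_re, mul_im, conj_re, conj_im, I_re, I_im,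
    ofReal_re, ofReal_im, add_re, add_im] at hre him ⊢
  norm_num at hre him ⊢
  linear_combination (2 * c.re) * hre + (2 * c.im) * him

theorem energy_flux_identity {τ f' S S' V V'' C : ℝ}
    (h : I * c + 1 / 2 * d = ((f' + 1 / τ * S + V : ℝ) : ℂ) * a) (hS' : S' = (b / a).im)
    (hV'' : -V'' = ‖a‖ ^ 2 - C) (Vt : ℝ) :
    ⟪d, c⟫_ℝ + 1 / τ * (S' * ⟪I * a, b⟫_ℝ + S * (⟪I * b, b⟫_ℝ + ⟪I * a, d⟫_ℝ)) + V'' * Vt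
      = f' * (2 * ⟪a, c⟫_ℝ) + 1 / τ * (‖a‖ ^ 2 * (b / a).im ^ 2)
        + (V * (2 * ⟪a, c⟫_ℝ) - (‖a‖ ^ 2 - C) * Vt) := by
  rw [inner_eq_potential_mul_of_schrodinger h, Complex.inner_I_mul_eq_sq_norm_mul_im_div, hS']
  linear_combination (1 / τ * S) * continuity_eq_of_schrodinger h b - Vt * hV''

end SchrodingerAlgebra

section SchrodingerLangevin

variable {τ T : ℝ} {f C : ℝ → ℝ} {ψ : ℝ → ℝ → ℂ} {S V : ℝ → ℝ → ℝ}

noncomputable def energyDensity (f : ℝ → ℝ) (ψ : ℝ → ℝ → ℂ) (V : ℝ → ℝ → ℝ) (t x : ℝ) : ℝ :=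
  1 / 2 * ‖∂ₓ ψ t x‖ ^ 2 + f (‖ψ t x‖ ^ 2) + 1 / 2 * ∂ₓ V t x ^ 2

noncomputable def energyDensityRate (f : ℝ → ℝ) (ψ : ℝ → ℝ → ℂ) (V : ℝ → ℝ → ℝ) (t x : ℝ) :
    ℝ :=
  ⟪∂ₓ ψ t x, ∂ₓ (∂ₜ ψ) t x⟫_ℝ + deriv f (‖ψ t x‖ ^ 2) * (2 * ⟪ψ t x, ∂ₜ ψ t x⟫_ℝ)
    + ∂ₓ V t x * ∂ₓ (∂ₜ V) t x

/- `⟪I * ψ, ∂ₓ ψ⟫_ℝ = Im (conj ψ * ∂ₓ ψ)` is the current `ρ v`. -/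
noncomputable def energyFlux (τ : ℝ) (ψ : ℝ → ℝ → ℂ) (S V : ℝ → ℝ → ℝ) (t x : ℝ) : ℝ :=
  ⟪∂ₓ ψ t x, ∂ₜ ψ t x⟫_ℝ + 1 / τ * (S t x * ⟪I * ψ t x, ∂ₓ ψ t x⟫_ℝ) + ∂ₓ V t x * ∂ₜ V t x

theorem continuous_energyDensity (hf : Continuous f) (hψ : ContDiff ℝ 1 (uncurry ψ))
    (hV : ContDiff ℝ 1 (uncurry V)) : Continuous (uncurry (energyDensity f ψ V)) := by
  have := hψ.continuous
  have := hψ.continuous_uncurry_spaceDeriv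
  have := hV.continuous_uncurry_spaceDeriv
  unfold energyDensity
  fun_prop

theorem continuous_energyDensityRate (hf : ContDiff ℝ 1 f) (hψ : ContDiff ℝ 2 (uncurry ψ))
    (hV : ContDiff ℝ 2 (uncurry V)) : Continuous (uncurry (energyDensityRate f ψ V)) := by
  have := hf.continuous_deriv le_rfl
  have := hψ.continuous
  have := (hψ.of_le one_le_two).continuous_uncurry_spaceDeriv
  have := (hψ.of_le one_le_two).continuous_uncurry_timeDeriv
  have := (ContDiff.uncurry_timeDeriv (n := 1) hψ).continuous_uncurry_spaceDeriv
  have := (hV.of_le one_le_two).continuous_uncurry_spaceDeriv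
  have := (ContDiff.uncurry_timeDeriv (n := 1) hV).continuous_uncurry_spaceDeriv
  unfold energyDensityRate
  fun_prop

theorem hasDerivAt_energyDensity (hf : Differentiable ℝ f) (hψ : ContDiff ℝ 2 (uncurry ψ))
    (hV : ContDiff ℝ 2 (uncurry V)) (t x : ℝ) :
    HasDerivAt (fun s => energyDensity f ψ V s x) (energyDensityRate f ψ V t x) t := by
  have hψx := (ContDiff.uncurry_spaceDeriv (n := 1) hψ).differentiable (by simp)
  have hVx := (ContDiff.uncurry_spaceDeriv (n := 1) hV).differentiable (by simp)
  have h1 := (hasDerivAt_timeDeriv (hψx (t, x))).norm_sq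
  have h2 := (hf _).hasDerivAt.comp t
    (hasDerivAt_timeDeriv (hψ.differentiable (by simp) (t, x))).norm_sq
  have h3 := (hasDerivAt_timeDeriv (hVx (t, x))).pow 2
  rw [timeDeriv_spaceDeriv hψ] at h1
  rw [timeDeriv_spaceDeriv hV] at h3
  refine (((h1.const_mul (1 / 2)).add h2).add (h3.const_mul (1 / 2))).congr_deriv ?_
  simp only [energyDensityRate]
  ring

theorem hasDerivAt_integral_energyDensity (hf : ContDiff ℝ 1 f)
    (hψ : ContDiff ℝ 2 (uncurry ψ)) (hV : ContDiff ℝ 2 (uncurry V)) (s : ℝ) :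
    HasDerivAt (fun t => ∫ x in 0..1, energyDensity f ψ V t x)
      (∫ x in 0..1, energyDensityRate f ψ V s x) s :=
  hasDerivAt_intervalIntegral_of_continuous
    (continuous_energyDensity hf.continuous (hψ.of_le one_le_two) (hV.of_le one_le_two))
    (continuous_energyDensityRate hf hψ hV)
    (hasDerivAt_energyDensity (hf.differentiable one_ne_zero) hψ hV) 0 1 s

theorem hasDerivAt_energyFlux (hψ : ContDiff ℝ 2 (uncurry ψ)) (hS : Differentiable ℝ (uncurry S))
    (hV : ContDiff ℝ 2 (uncurry V)) {t x : ℝ}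
    (heq : I * ∂ₜ ψ t x + 1 / 2 * ∂ₓ (∂ₓ ψ) t x
      = ofReal (deriv f (‖ψ t x‖ ^ 2)) * ψ t x + (1 / τ : ℂ) * (S t x : ℂ) * ψ t x
        + (V t x : ℂ) * ψ t x)
    (hSx : ∂ₓ S t x = (∂ₓ ψ t x / ψ t x).im)
    (hPoisson : -∂ₓ (∂ₓ V) t x = ‖ψ t x‖ ^ 2 - C x) :
    HasDerivAt (energyFlux τ ψ S V t)
      (energyDensityRate f ψ V t x + 1 / τ * (‖ψ t x‖ ^ 2 * (∂ₓ ψ t x / ψ t x).im ^ 2)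
        + (V t x * (2 * ⟪ψ t x, ∂ₜ ψ t x⟫_ℝ) - (‖ψ t x‖ ^ 2 - C x) * ∂ₜ V t x)) x := by
  have dψ := hasDerivAt_spaceDeriv (hψ.differentiable (by simp) (t, x))
  have dψx := hasDerivAt_spaceDeriv
    ((ContDiff.uncurry_spaceDeriv (n := 1) hψ).differentiable (by simp) (t, x))
  have dψt := hasDerivAt_spaceDeriv
    ((ContDiff.uncurry_timeDeriv (n := 1) hψ).differentiable (by simp) (t, x))
  have dS := hasDerivAt_spaceDeriv (hS (t, x))
  have dVx := hasDerivAt_spaceDeriv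
    ((ContDiff.uncurry_spaceDeriv (n := 1) hV).differentiable (by simp) (t, x))
  have dVt := hasDerivAt_spaceDeriv
    ((ContDiff.uncurry_timeDeriv (n := 1) hV).differentiable (by simp) (t, x))
  refine (((dψx.inner ℝ dψt).add
    ((dS.mul ((dψ.const_mul I).inner ℝ dψx)).const_mul (1 / τ))).add
    (dVx.mul dVt)).congr_deriv ?_
  have heq' : I * ∂ₜ ψ t x + 1 / 2 * ∂ₓ (∂ₓ ψ) t x
      = ((deriv f (‖ψ t x‖ ^ 2) + 1 / τ * S t x + V t x : ℝ) : ℂ) * ψ t x := by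
    rw [heq]; push_cast; ring
  rw [energyDensityRate]
  linear_combination energy_flux_identity heq' hSx hPoisson (∂ₜ V t x)

theorem periodic_phase (hτ : τ ≠ 0) (hψper : ∀ t, Periodic (ψ t) 1)
    (hVper : ∀ t, Periodic (V t) 1) {t : ℝ} (hne : ∀ x, ψ t x ≠ 0)
    (heq : ∀ x, I * ∂ₜ ψ t x + 1 / 2 * ∂ₓ (∂ₓ ψ) t x
      = ofReal (deriv f (‖ψ t x‖ ^ 2)) * ψ t x + (1 / τ : ℂ) * (S t x : ℂ) * ψ t x
        + (V t x : ℂ) * ψ t x) :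
    Periodic (S t) 1 := by
  intro x
  have h := heq (x + 1)
  rw [periodic_timeDeriv hψper t x, periodic_spaceDeriv (periodic_spaceDeriv hψper) t x,
    hψper t x, hVper t x, heq x] at h
  have h' : ((S t (x + 1) - S t x : ℝ) : ℂ) * ((1 / τ : ℂ) * ψ t x) = 0 := by
    push_cast; linear_combination -h
  simpa [sub_eq_zero, hτ, hne x] using h'

theorem periodic_energyFlux (hψper : ∀ t, Periodic (ψ t) 1) (hVper : ∀ t, Periodic (V t) 1)
    {t : ℝ} (hSper : Periodic (S t) 1) : Periodic (energyFlux τ ψ S V t) 1 := fun x => by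
  simp only [energyFlux, periodic_spaceDeriv hψper t x, periodic_timeDeriv hψper t x, hψper t x,
    hSper x, periodic_spaceDeriv hVper t x, periodic_timeDeriv hVper t x]

theorem integral_energyDensityRate (hτ : τ ≠ 0) (hf : ContDiff ℝ 1 f) (hC : Continuous C)
    (hψ : ContDiff ℝ 2 (uncurry ψ)) (hS : ContDiff ℝ 1 (uncurry S))
    (hV : ContDiff ℝ 2 (uncurry V)) (hψper : ∀ t, Periodic (ψ t) 1)
    (hVper : ∀ t, Periodic (V t) 1)
    (heq : ∀ t ∈ Ico 0 T, ∀ x, I * ∂ₜ ψ t x + 1 / 2 * ∂ₓ (∂ₓ ψ) t x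
      = ofReal (deriv f (‖ψ t x‖ ^ 2)) * ψ t x + (1 / τ : ℂ) * (S t x : ℂ) * ψ t x
        + (V t x : ℂ) * ψ t x)
    (hSx : ∀ t ∈ Ico 0 T, ∀ x, ∂ₓ S t x = (∂ₓ ψ t x / ψ t x).im)
    (hPoisson : ∀ t ∈ Ico 0 T, ∀ x, -∂ₓ (∂ₓ V) t x = ‖ψ t x‖ ^ 2 - C x)
    {s : ℝ} (hs : s ∈ Ico 0 T) (hne : ∀ x, ψ s x ≠ 0) :
    ∫ x in 0..1, energyDensityRate f ψ V s x
      = -(1 / τ) * ∫ x in 0..1, ‖ψ s x‖ ^ 2 * (∂ₓ ψ s x / ψ s x).im ^ 2 := by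
  have := continuous_energyDensityRate hf hψ hV
  have := hψ.continuous
  have := (hψ.of_le one_le_two).continuous_uncurry_spaceDeriv
  have := (hψ.of_le one_le_two).continuous_uncurry_timeDeriv
  have := hV.continuous
  have := (hV.of_le one_le_two).continuous_uncurry_timeDeriv
  have hflux := integral_deriv_eq_zero_of_periodic
    (fun x => hasDerivAt_energyFlux hψ (hS.differentiable one_ne_zero) hV (heq s hs x)
      (hSx s hs x) (hPoisson s hs x))
    (by fun_prop (disch := exact hne _))
    (periodic_energyFlux hψper hVper (periodic_phase hτ hψper hVper hne (heq s hs)))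
  have hreciprocity := integral_mul_timeDeriv_eq_of_poisson
    (g := fun t x => ‖ψ t x‖ ^ 2 - C x) (g' := fun t x => 2 * ⟪ψ t x, ∂ₜ ψ t x⟫_ℝ)
    hV hVper (by fun_prop) (by fun_prop)
    (fun t x => (hasDerivAt_timeDeriv (hψ.differentiable (by simp) (t, x))).norm_sq.sub_const _)
    hPoisson hs
  have integrable : ∀ {u : ℝ → ℝ}, Continuous u → IntervalIntegrable u volume 0 1 :=
    fun hu => hu.intervalIntegrable 0 1
  rw [intervalIntegral.integral_add (integrable (by fun_prop (disch := exact hne _))) (integrable (by fun_prop)),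
    intervalIntegral.integral_add (integrable (by fun_prop)) (integrable (by fun_prop (disch := exact hne _))),
    intervalIntegral.integral_sub (integrable (by fun_prop)) (integrable (by fun_prop)),
    intervalIntegral.integral_const_mul] at hflux
  linarith

end SchrodingerLangevin

theorem schrodinger_langevin_energy_dissipation_general
    (T τ δ : ℝ) (hτ : 0 < τ) (hδ : 0 < δ)
    (f : ℝ → ℝ) (hf : ContDiff ℝ 2 f)
    (Cfun : ℝ → ℝ) (hC : Continuous Cfun)
    (ψ : ℝ → ℝ → ℂ) (S V : ℝ → ℝ → ℝ)
    (hψ : ContDiff ℝ 2 (fun q : ℝ × ℝ => ψ q.1 q.2))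
    (hS : ContDiff ℝ 2 (fun q : ℝ × ℝ => S q.1 q.2))
    (hV : ContDiff ℝ 2 (fun q : ℝ × ℝ => V q.1 q.2))
    (hψper : ∀ t x, ψ t (x + 1) = ψ t x)
    (hVper : ∀ t x, V t (x + 1) = V t x)
    (hpos : ∀ t x, δ ≤ (‖ψ t x‖) ^ 2)
    (heq : ∀ t ∈ Set.Ico (0:ℝ) T, ∀ x : ℝ,
      Complex.I * deriv (fun s => ψ s x) t
          + (1/2) * deriv (deriv (fun y => ψ t y)) x
        = Complex.ofReal (deriv f ((‖ψ t x‖) ^ 2)) * ψ t x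
            + (1/τ : ℂ) * (S t x : ℂ) * ψ t x + (V t x : ℂ) * ψ t x)
    (hSgrad : ∀ t ∈ Set.Ico (0:ℝ) T, ∀ x : ℝ,
      deriv (fun y => S t y) x = (deriv (fun y => ψ t y) x / ψ t x).im)
    (hPoisson : ∀ t ∈ Set.Ico (0:ℝ) T, ∀ x : ℝ,
      -(deriv (deriv (fun y => V t y)) x) = (‖ψ t x‖) ^ 2 - Cfun x) :
    ∀ t ∈ Set.Ico (0:ℝ) T,
      (∫ x in (0:ℝ)..1,
          ((1/2) * (‖deriv (fun y => ψ t y) x‖) ^ 2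
            + f ((‖ψ t x‖) ^ 2)
            + (1/2) * (deriv (fun y => V t y) x) ^ 2))
        + (1/τ) * ∫ s in (0:ℝ)..t, ∫ x in (0:ℝ)..1,
            (‖ψ s x‖) ^ 2 * ((deriv (fun y => ψ s y) x / ψ s x).im) ^ 2
      = ∫ x in (0:ℝ)..1,
          ((1/2) * (‖deriv (fun y => ψ 0 y) x‖) ^ 2
            + f ((‖ψ 0 x‖) ^ 2)
            + (1/2) * (deriv (fun y => V 0 y) x) ^ 2) := by
  intro t ht
  have hne : ∀ s x, ψ s x ≠ 0 := fun s x h0 => by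
    have := hpos s x
    simp only [h0, norm_zero] at this
    linarith
  have hf1 : ContDiff ℝ 1 f := hf.of_le one_le_two
  have hψ' : ContDiff ℝ 2 (uncurry ψ) := hψ
  have := hψ'.continuous
  have := (hψ'.of_le one_le_two).continuous_uncurry_spaceDeriv
  have hD : Continuous fun s => ∫ x in 0..1, ‖ψ s x‖ ^ 2 * (∂ₓ ψ s x / ψ s x).im ^ 2 := by
    fun_prop (disch := exact fun p => hne p.1 p.2)
  have hE : ∀ s ∈ uIcc 0 t, HasDerivAt (fun r => ∫ x in 0..1, energyDensity f ψ V r x)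
      (-(1 / τ) * ∫ x in 0..1, ‖ψ s x‖ ^ 2 * (∂ₓ ψ s x / ψ s x).im ^ 2) s := fun s hs => by
    rw [uIcc_of_le ht.1] at hs
    rw [← integral_energyDensityRate hτ.ne' hf1 hC hψ (hS.of_le one_le_two) hV hψper hVper heq
      hSgrad hPoisson ⟨hs.1, hs.2.trans_lt ht.2⟩ (hne s)]
    exact hasDerivAt_integral_energyDensity hf1 hψ hV s
  have hFTC := intervalIntegral.integral_eq_sub_of_hasDerivAt hE
    ((continuous_const.mul hD).intervalIntegrable 0 t)
  rw [intervalIntegral.integral_const_mul] at hFTC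
  show (∫ x in 0..1, energyDensity f ψ V t x)
      + 1 / τ * ∫ s in 0..t, ∫ x in 0..1, ‖ψ s x‖ ^ 2 * (∂ₓ ψ s x / ψ s x).im ^ 2
    = ∫ x in 0..1, energyDensity f ψ V 0 x
  linarith

/-- Energy dissipation for the Schrödinger–Langevin equation: if `ψ` (smooth, periodic in
space, with density bounded below by `δ > 0`) solves
`i∂_tψ + (1/2)∂_x²ψ = f'(|ψ|²)ψ + (1/τ)Sψ + Vψ`, where `∂_x S = v = Im(∂_xψ/ψ)` and
`−∂_x²V = |ψ|² − C(x)` with `∫ V = 0`, then the energy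
`E(t) = ∫ (1/2)|∂_xψ|² + f(|ψ|²) + (1/2)(∂_xV)²` satisfies
`E(t) + (1/τ)∫₀ᵗ∫ ρ v² = E(0)`. -/
theorem schrodinger_langevin_energy_dissipation
    (T τ δ : ℝ) (hT : 0 < T) (hτ : 0 < τ) (hδ : 0 < δ)
    (f : ℝ → ℝ) (hf : ContDiff ℝ 2 f) (hf0 : ∀ s, 0 ≤ f s)
    (Cfun : ℝ → ℝ) (hC : Continuous Cfun) (hCper : Function.Periodic Cfun 1)
    (ψ : ℝ → ℝ → ℂ) (S V : ℝ → ℝ → ℝ)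
    (hψ : ContDiff ℝ 2 (fun q : ℝ × ℝ => ψ q.1 q.2))
    (hS : ContDiff ℝ 2 (fun q : ℝ × ℝ => S q.1 q.2))
    (hV : ContDiff ℝ 2 (fun q : ℝ × ℝ => V q.1 q.2))
    (hψper : ∀ t x, ψ t (x + 1) = ψ t x)
    (hVper : ∀ t x, V t (x + 1) = V t x)
    (hpos : ∀ t x, δ ≤ (‖ψ t x‖) ^ 2)
    (hmass : (∫ x in (0:ℝ)..1, Cfun x) = ∫ x in (0:ℝ)..1, (‖ψ 0 x‖) ^ 2)
    (heq : ∀ t ∈ Set.Ico (0:ℝ) T, ∀ x : ℝ,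
      Complex.I * deriv (fun s => ψ s x) t
          + (1/2) * deriv (deriv (fun y => ψ t y)) x
        = Complex.ofReal (deriv f ((‖ψ t x‖) ^ 2)) * ψ t x
            + (1/τ : ℂ) * (S t x : ℂ) * ψ t x + (V t x : ℂ) * ψ t x)
    (hSgrad : ∀ t ∈ Set.Ico (0:ℝ) T, ∀ x : ℝ,
      deriv (fun y => S t y) x = (deriv (fun y => ψ t y) x / ψ t x).im)
    (hPoisson : ∀ t ∈ Set.Ico (0:ℝ) T, ∀ x : ℝ,
      -(deriv (deriv (fun y => V t y)) x) = (‖ψ t x‖) ^ 2 - Cfun x)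
    (hVmean : ∀ t ∈ Set.Ico (0:ℝ) T, (∫ x in (0:ℝ)..1, V t x) = 0) :
    ∀ t ∈ Set.Ico (0:ℝ) T,
      (∫ x in (0:ℝ)..1,
          ((1/2) * (‖deriv (fun y => ψ t y) x‖) ^ 2
            + f ((‖ψ t x‖) ^ 2)
            + (1/2) * (deriv (fun y => V t y) x) ^ 2))
        + (1/τ) * ∫ s in (0:ℝ)..t, ∫ x in (0:ℝ)..1,
            (‖ψ s x‖) ^ 2 * ((deriv (fun y => ψ s y) x / ψ s x).im) ^ 2
      = ∫ x in (0:ℝ)..1,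
          ((1/2) * (‖deriv (fun y => ψ 0 y) x‖) ^ 2
            + f ((‖ψ 0 x‖) ^ 2)
            + (1/2) * (deriv (fun y => V 0 y) x) ^ 2) :=
  schrodinger_langevin_energy_dissipation_general T τ δ hτ hδ f hf Cfun hC ψ S V hψ hS hV hψper
    hVper hpos heq hSgrad hPoisson
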